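/- For Laurent monomials ŵ^p_{m,a} = (μ⁰)^{p+m-1}(μ¹)^{p-m-1} λ₀^{a+2-p} λ₁^{2-p-a} and the Poincaré-patch bracket {f,g}^P = ∂_{λ₀}f ∂_{μ⁰'}g + ∂_{λ₁}f ∂_{μ¹'}g − ∂_{μ⁰'}f ∂_{λ₀}g − ∂_{μ¹'}f ∂_{λ₁}g (where μ^{α'} are images of μ^{α̇} under a fixed isomorphism), the bracket of two generators is a linear combination of two generators ŵ^{p+q-3/2}_{m+n∓1/2, a+b∓1/2} with the structure constants ((p+m-1)(q-b-2)-(q+n-1)(p-a-2)) and ((p-m-1)(q+b-2)-(q-n-1)(p+a-2)) respectively. -/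

import Mathlib

/-- The Poincaré-patch bracket
`{f,g}^P = ∂_{λ₀}f ∂_{μ⁰'}g + ∂_{λ₁}f ∂_{μ¹'}g − ∂_{μ⁰'}f ∂_{λ₀}g − ∂_{μ¹'}f ∂_{λ₁}g`
in the variables `(x, y, s, t) = (μ⁰', μ¹', λ₀, λ₁)`. -/
noncomputable def pbP (f g : ℂ → ℂ → ℂ → ℂ → ℂ) : ℂ → ℂ → ℂ → ℂ → ℂ :=
  fun x y s t =>
    deriv (fun u => f x y u t) s * deriv (fun u => g u y s t) x
    + deriv (fun u => f x y s u) t * deriv (fun u => g x u s t) y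
    - deriv (fun u => f u y s t) x * deriv (fun u => g x y u t) s
    - deriv (fun u => f x u s t) y * deriv (fun u => g x y s u) t

/-- The Laurent monomial `(μ⁰)^i (μ¹)^j λ₀^k λ₁^l`. -/
noncomputable def mon (i j k l : ℤ) : ℂ → ℂ → ℂ → ℂ → ℂ :=
  fun x y s t => x ^ i * y ^ j * s ^ k * t ^ l

/-!
By the power rule, the bracket of two Laurent monomials is again a sum of two monomials, with
coefficients the determinants `k i' - i k'` and `l j' - j l'` of the exponent pairs of
`(λ₀, μ⁰')` and `(λ₁, μ¹')`. For the generators these exponents are affine in `p, m, a, q, n, b`,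
and the determinants expand to the stated structure constants.
-/

section
variable (i j k l : ℤ) (x y s t : ℂ)

theorem deriv_mon_x : deriv (fun u => mon i j k l u y s t) x = i * mon (i - 1) j k l x y s t := by
  simp only [mon, deriv_mul_const_field, deriv_zpow, mul_assoc]

theorem deriv_mon_y : deriv (fun u => mon i j k l x u s t) y = j * mon i (j - 1) k l x y s t := by
  simp only [mon, deriv_mul_const_field, deriv_const_mul_field, deriv_zpow]; ring

theorem deriv_mon_s : deriv (fun u => mon i j k l x y u t) s = k * mon i j (k - 1) l x y s t := by
  simp only [mon, deriv_mul_const_field, deriv_const_mul_field, deriv_zpow]; ring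

theorem deriv_mon_t : deriv (fun u => mon i j k l x y s u) t = l * mon i j k (l - 1) x y s t := by
  simp only [mon, deriv_const_mul_field, deriv_zpow]; ring

end

theorem pbP_mon (i j k l i' j' k' l' : ℤ) {x y s t : ℂ}
    (hx : x ≠ 0) (hy : y ≠ 0) (hs : s ≠ 0) (ht : t ≠ 0) :
    pbP (mon i j k l) (mon i' j' k' l') x y s t
      = ((k * i' - i * k' : ℤ) : ℂ) * mon (i + i' - 1) (j + j') (k + k' - 1) (l + l') x y s t
        + ((l * j' - j * l' : ℤ) : ℂ) * mon (i + i') (j + j' - 1) (k + k') (l + l' - 1) x y s t := by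
  simp only [pbP, deriv_mon_x, deriv_mon_y, deriv_mon_s, deriv_mon_t]
  simp only [mon, zpow_sub_one₀ hx, zpow_sub_one₀ hy, zpow_sub_one₀ hs, zpow_sub_one₀ ht,
    zpow_add₀ hx, zpow_add₀ hy, zpow_add₀ hs, zpow_add₀ ht]
  push_cast
  ring

theorem poincare_bracket_of_generators_general (p m a q n b : ℚ)
    (k₁ k₂ e₁ e₂ l₁ l₂ g₁ g₂ : ℤ)
    (h₁ : (k₁ : ℚ) = p + m - 1) (h₂ : (k₂ : ℚ) = p - m - 1)
    (h₃ : (e₁ : ℚ) = a + 2 - p) (h₄ : (e₂ : ℚ) = 2 - p - a)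
    (h₅ : (l₁ : ℚ) = q + n - 1) (h₆ : (l₂ : ℚ) = q - n - 1)
    (h₇ : (g₁ : ℚ) = b + 2 - q) (h₈ : (g₂ : ℚ) = 2 - q - b)
    (x y s t : ℂ) (hx : x ≠ 0) (hy : y ≠ 0) (hs : s ≠ 0) (ht : t ≠ 0) :
    pbP (mon k₁ k₂ e₁ e₂) (mon l₁ l₂ g₁ g₂) x y s t
      = (((p + m - 1) * (q - b - 2) - (q + n - 1) * (p - a - 2) : ℚ) : ℂ) *
          mon (k₁ + l₁ - 1) (k₂ + l₂) (e₁ + g₁ - 1) (e₂ + g₂) x y s t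
        + (((p - m - 1) * (q + b - 2) - (q - n - 1) * (p + a - 2) : ℚ) : ℂ) *
          mon (k₁ + l₁) (k₂ + l₂ - 1) (e₁ + g₁) (e₂ + g₂ - 1) x y s t := by
  have hc₁ : (p + m - 1) * (q - b - 2) - (q + n - 1) * (p - a - 2)
      = ((e₁ * l₁ - k₁ * g₁ : ℤ) : ℚ) := by
    push_cast; rw [h₁, h₃, h₅, h₇]; ring
  have hc₂ : (p - m - 1) * (q + b - 2) - (q - n - 1) * (p + a - 2)
      = ((e₂ * l₂ - k₂ * g₂ : ℤ) : ℚ) := by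
    push_cast; rw [h₂, h₄, h₆, h₈]; ring
  rw [pbP_mon _ _ _ _ _ _ _ _ hx hy hs ht, hc₁, hc₂, Rat.cast_intCast, Rat.cast_intCast]

/-- For `ŵ^p_{m,a} = (μ⁰)^{p+m-1}(μ¹)^{p-m-1} λ₀^{a+2-p} λ₁^{2-p-a}` the
Poincaré-patch bracket of two generators is the stated combination of the two
generators `ŵ^{p+q-3/2}_{m+n∓1/2, a+b∓1/2}`. -/
theorem poincare_bracket_of_generators (p m a q n b : ℚ)
    (k₁ k₂ e₁ e₂ l₁ l₂ g₁ g₂ : ℤ)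
    (hk₁ : 0 ≤ k₁) (hk₂ : 0 ≤ k₂) (hl₁ : 0 ≤ l₁) (hl₂ : 0 ≤ l₂)
    (h₁ : (k₁ : ℚ) = p + m - 1) (h₂ : (k₂ : ℚ) = p - m - 1)
    (h₃ : (e₁ : ℚ) = a + 2 - p) (h₄ : (e₂ : ℚ) = 2 - p - a)
    (h₅ : (l₁ : ℚ) = q + n - 1) (h₆ : (l₂ : ℚ) = q - n - 1)
    (h₇ : (g₁ : ℚ) = b + 2 - q) (h₈ : (g₂ : ℚ) = 2 - q - b)
    (x y s t : ℂ) (hx : x ≠ 0) (hy : y ≠ 0) (hs : s ≠ 0) (ht : t ≠ 0) :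
    pbP (mon k₁ k₂ e₁ e₂) (mon l₁ l₂ g₁ g₂) x y s t
      = (((p + m - 1) * (q - b - 2) - (q + n - 1) * (p - a - 2) : ℚ) : ℂ) *
          mon (k₁ + l₁ - 1) (k₂ + l₂) (e₁ + g₁ - 1) (e₂ + g₂) x y s t
        + (((p - m - 1) * (q + b - 2) - (q - n - 1) * (p + a - 2) : ℚ) : ℂ) *
          mon (k₁ + l₁) (k₂ + l₂ - 1) (e₁ + g₁) (e₂ + g₂ - 1) x y s t :=
  poincare_bracket_of_generators_general p m a q n b k₁ k₂ e₁ e₂ l₁ l₂ g₁ g₂ h₁ h₂ h₃ h₄ h₅ h₆ h₇ h₈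
    x y s t hx hy hs ht
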